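/- arXiv:1501.00924 — 2 statements merged into one kernel-verified Lean document; each statement's English description precedes it below -/
import Mathlib

section
/- There exists a constant C depending only on β⁻ and β⁺ (independent of d, e and h) such that for all 0 < h < 1, all d, e ∈ [0,1] with (d,e) ≠ (0,0), every linear IFE function v on K with interface parameters (d,e), and every edge B of K with unit normal n_B: ∥β ∇v · n_B∥_{L²(B)} ≤ C h^{1/2} |K|^{-1/2} ∥√β ∇v∥_{L²(K)}. -/
/-!
The jump conditions at `D` and `E` make the tangential derivative of `v` along `DE` continuous,
and the flux condition makes `β ∇v · n_{DE}` continuous. Decomposing along `n_{DE}`, the two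
constant gradients therefore have comparable lengths: `min β |∇v^∓| ≤ max β |∇v^±|`. Since `K⁻`
and `K⁺` together cover the square `[0, h/2]²`, the energy dominates `min β · h² / 4` times the
smaller of `|∇v⁻|²`, `|∇v⁺|²`, hence a multiple of `h²` times the larger one, while the squared
edge norm is at most `2h (β⁻² + β⁺²)` times the larger one.
-/

open MeasureTheory

/-- The closed triangle `K` with vertices `(0,0)`, `(h,0)`, `(0,h)`. -/
def triK (h : ℝ) : Set (ℝ × ℝ) := {X | 0 ≤ X.1 ∧ 0 ≤ X.2 ∧ X.1 + X.2 ≤ h}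

/-- The subelement `K⁻ = {(x,y) ∈ K : d x + e y ≤ d e h}`. -/
def triKm (h d e : ℝ) : Set (ℝ × ℝ) := {X ∈ triK h | d * X.1 + e * X.2 ≤ d * e * h}

/-- The subelement `K⁺ = {(x,y) ∈ K : d x + e y ≥ d e h}`. -/
def triKp (h d e : ℝ) : Set (ℝ × ℝ) := {X ∈ triK h | d * e * h ≤ d * X.1 + e * X.2}

/-- `∥√β ∇v∥²_{L²(K)} = β⁻∫_{K⁻}|∇v⁻|² + β⁺∫_{K⁺}|∇v⁺|²` for the piecewise linear
function with gradients `(c₂⁻,c₃⁻)` on `K⁻` and `(c₂⁺,c₃⁺)` on `K⁺`. -/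
noncomputable def energySqLin (βm βp h d e c2m c3m c2p c3p : ℝ) : ℝ :=
  βm * (∫ _X in triKm h d e, (c2m ^ 2 + c3m ^ 2)) +
    βp * (∫ _X in triKp h d e, (c2p ^ 2 + c3p ^ 2))

/-- `∥β ∇v·n_B∥²_{L²(B)} = ∫_{B∩K⁻}(β⁻ ∇v⁻·n_B)² ds + ∫_{B∩K⁺}(β⁺ ∇v⁺·n_B)² ds`, where the
segment `B` from `P` to `Q` is parametrized by `t ↦ P + t(Q-P)`, `t ∈ [0,1]`, and `ds` is
the arclength measure. -/
noncomputable def edgeSqLinN (βm βp h d e c2m c3m c2p c3p : ℝ) (P Q nB : ℝ × ℝ) : ℝ :=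
  Real.sqrt ((Q.1 - P.1) ^ 2 + (Q.2 - P.2) ^ 2) *
    ((∫ _t in {t : ℝ | t ∈ Set.Icc (0:ℝ) 1 ∧ P + t • (Q - P) ∈ triKm h d e},
        (βm * (c2m * nB.1 + c3m * nB.2)) ^ 2) +
     (∫ _t in {t : ℝ | t ∈ Set.Icc (0:ℝ) 1 ∧ P + t • (Q - P) ∈ triKp h d e},
        (βp * (c2p * nB.1 + c3p * nB.2)) ^ 2))

open Set

/-- With `n = (d, e)`, `|n|² |g|² = (n · g)² + (n × g)²`. -/
lemma sq_mul_sq_add_sq_le_of_jump {d e u v u' v' a b k : ℝ} (hs : 0 < d ^ 2 + e ^ 2)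
    (htan : d * v - e * u = d * v' - e * u')
    (hflux : a * (d * u + e * v) = b * (d * u' + e * v'))
    (ha : a ^ 2 ≤ k) (hb : b ^ 2 ≤ k) :
    a ^ 2 * (u ^ 2 + v ^ 2) ≤ k * (u' ^ 2 + v' ^ 2) := by
  refine le_of_mul_le_mul_left ?_ hs
  calc (d ^ 2 + e ^ 2) * (a ^ 2 * (u ^ 2 + v ^ 2))
      = b ^ 2 * (d * u' + e * v') ^ 2 + a ^ 2 * (d * v' - e * u') ^ 2 := by
        rw [← mul_pow, ← hflux, ← htan]; ring
    _ ≤ k * (d * u' + e * v') ^ 2 + k * (d * v' - e * u') ^ 2 := by gcongr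
    _ = (d ^ 2 + e ^ 2) * (k * (u' ^ 2 + v' ^ 2)) := by ring

lemma min_sq_mul_max_le_max_sq_mul_min {βm βp h d e c1m c2m c3m c1p c2p c3p : ℝ}
    (hβm : 0 < βm) (hβp : 0 < βp) (hh : 0 < h) (hde : (d, e) ≠ (0, 0))
    (hJ1 : c1m + c3m * (d * h) = c1p + c3p * (d * h))
    (hJ2 : c1m + c2m * (e * h) = c1p + c2p * (e * h))
    (hflux : βm * (d * c2m + e * c3m) = βp * (d * c2p + e * c3p)) :
    min βm βp ^ 2 * max (c2m ^ 2 + c3m ^ 2) (c2p ^ 2 + c3p ^ 2) ≤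
      max βm βp ^ 2 * min (c2m ^ 2 + c3m ^ 2) (c2p ^ 2 + c3p ^ 2) := by
  have hs : 0 < d ^ 2 + e ^ 2 := by
    have : d ≠ 0 ∨ e ≠ 0 := by
      by_contra! h0
      exact hde (by rw [h0.1, h0.2])
    rcases this with h0 | h0 <;> positivity
  have htan : d * c3m - e * c2m = d * c3p - e * c2p :=
    mul_left_cancel₀ hh.ne' (by linear_combination hJ1 - hJ2)
  have hmax_m : βm ^ 2 ≤ max βm βp ^ 2 := by gcongr; exact le_max_left _ _
  have hmax_p : βp ^ 2 ≤ max βm βp ^ 2 := by gcongr; exact le_max_right _ _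
  have hmin_m : min βm βp ^ 2 ≤ βm ^ 2 := by gcongr; exact min_le_left _ _
  have hmin_p : min βm βp ^ 2 ≤ βp ^ 2 := by gcongr; exact min_le_right _ _
  have hmp := sq_mul_sq_add_sq_le_of_jump hs htan hflux hmax_m hmax_p
  have hpm := sq_mul_sq_add_sq_le_of_jump hs htan.symm hflux.symm hmax_p hmax_m
  rcases le_total (c2m ^ 2 + c3m ^ 2) (c2p ^ 2 + c3p ^ 2) with hle | hle
  · rw [max_eq_right hle, min_eq_left hle]
    exact (mul_le_mul_of_nonneg_right hmin_p (by positivity)).trans hpm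
  · rw [max_eq_left hle, min_eq_right hle]
    exact (mul_le_mul_of_nonneg_right hmin_m (by positivity)).trans hmp

lemma triK_subset_Icc_prod_Icc (h : ℝ) : triK h ⊆ Icc 0 h ×ˢ Icc 0 h :=
  fun _ ⟨hx, hy, hxy⟩ => ⟨⟨hx, by linarith⟩, ⟨hy, by linarith⟩⟩

lemma volume_lt_top_of_subset_triK {s : Set (ℝ × ℝ)} {h : ℝ} (hs : s ⊆ triK h) :
    volume s < ⊤ :=
  (Metric.isBounded_Icc _ _ |>.prod (Metric.isBounded_Icc _ _) |>.subset
    (hs.trans (triK_subset_Icc_prod_Icc h))).measure_lt_top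

lemma sq_div_four_le_volume_triKm_add_triKp {h : ℝ} (hh : 0 ≤ h) (d e : ℝ) :
    h ^ 2 / 4 ≤ volume.real (triKm h d e) + volume.real (triKp h d e) := by
  have hsq : Icc 0 (h / 2) ×ˢ Icc 0 (h / 2) ⊆ triKm h d e ∪ triKp h d e := by
    rintro X ⟨⟨hx, hx'⟩, ⟨hy, hy'⟩⟩
    have hK : X ∈ triK h := ⟨hx, hy, by linarith⟩
    exact (le_total (d * X.1 + e * X.2) (d * e * h)).imp (⟨hK, ·⟩) (⟨hK, ·⟩)
  have hfin : volume (triKm h d e ∪ triKp h d e) ≠ ⊤ :=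
    (volume_lt_top_of_subset_triK (union_subset (fun _ hX => hX.1) fun _ hX => hX.1)).ne
  calc h ^ 2 / 4 = volume.real (Icc (0 : ℝ) (h / 2) ×ˢ Icc (0 : ℝ) (h / 2)) := by
        rw [Measure.volume_eq_prod, measureReal_prod_prod, Real.volume_real_Icc,
          max_eq_left (by linarith)]
        ring
    _ ≤ volume.real (triKm h d e ∪ triKp h d e) := measureReal_mono hsq hfin
    _ ≤ _ := measureReal_union_le _ _

lemma energySqLin_eq (βm βp h d e c2m c3m c2p c3p : ℝ) :
    energySqLin βm βp h d e c2m c3m c2p c3p =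
      βm * volume.real (triKm h d e) * (c2m ^ 2 + c3m ^ 2) +
        βp * volume.real (triKp h d e) * (c2p ^ 2 + c3p ^ 2) := by
  simp only [energySqLin, setIntegral_const, smul_eq_mul, mul_assoc]

lemma min_mul_sq_div_four_mul_min_le_energySqLin {βm βp h : ℝ} (hβm : 0 < βm) (hβp : 0 < βp)
    (hh : 0 ≤ h) (d e c2m c3m c2p c3p : ℝ) :
    min βm βp * (h ^ 2 / 4) * min (c2m ^ 2 + c3m ^ 2) (c2p ^ 2 + c3p ^ 2) ≤
      energySqLin βm βp h d e c2m c3m c2p c3p := by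
  rw [energySqLin_eq]
  have harea := sq_div_four_le_volume_triKm_add_triKp hh d e
  calc _ ≤ min βm βp * (volume.real (triKm h d e) + volume.real (triKp h d e)) *
        min (c2m ^ 2 + c3m ^ 2) (c2p ^ 2 + c3p ^ 2) := by gcongr
    _ ≤ _ := by
      rw [mul_add, add_mul]
      gcongr
      exacts [min_le_left _ _, min_le_left _ _, min_le_right _ _, min_le_right _ _]

lemma volume_real_le_one_of_subset_Icc {s : Set ℝ} (hs : s ⊆ Icc 0 1) : volume.real s ≤ 1 :=
  (measureReal_mono hs measure_Icc_lt_top.ne).trans (by simp)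

lemma sq_dot_le_of_sq_add_sq_eq_one {a b n₁ n₂ : ℝ} (hn : n₁ ^ 2 + n₂ ^ 2 = 1) :
    (a * n₁ + b * n₂) ^ 2 ≤ a ^ 2 + b ^ 2 := by
  nlinarith [sq_nonneg (a * n₂ - b * n₁)]

lemma edgeSqLinN_le (βm βp h d e c2m c3m c2p c3p : ℝ) (P Q : ℝ × ℝ) {nB : ℝ × ℝ}
    (hn : nB.1 ^ 2 + nB.2 ^ 2 = 1) :
    edgeSqLinN βm βp h d e c2m c3m c2p c3p P Q nB ≤
      √((Q.1 - P.1) ^ 2 + (Q.2 - P.2) ^ 2) *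
        (βm ^ 2 * (c2m ^ 2 + c3m ^ 2) + βp ^ 2 * (c2p ^ 2 + c3p ^ 2)) := by
  rw [edgeSqLinN, setIntegral_const, setIntegral_const, smul_eq_mul, smul_eq_mul]
  refine mul_le_mul_of_nonneg_left (add_le_add ?_ ?_) (Real.sqrt_nonneg _) <;>
    refine (mul_le_of_le_one_left (sq_nonneg _)
      (volume_real_le_one_of_subset_Icc fun _ ht => ht.1)).trans ?_ <;>
    rw [mul_pow] <;> gcongr <;> exact sq_dot_le_of_sq_add_sq_eq_one hn

lemma edge_length_le {h : ℝ} (hh : 0 ≤ h) {P Q : ℝ × ℝ}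
    (hPQ : (P = ((0:ℝ), (0:ℝ)) ∧ Q = (h, 0)) ∨ (P = ((0:ℝ), (0:ℝ)) ∧ Q = (0, h)) ∨
      (P = ((h:ℝ), (0:ℝ)) ∧ Q = (0, h))) :
    √((Q.1 - P.1) ^ 2 + (Q.2 - P.2) ^ 2) ≤ 2 * h := by
  rw [Real.sqrt_le_left (by positivity)]
  rcases hPQ with ⟨rfl, rfl⟩ | ⟨rfl, rfl⟩ | ⟨rfl, rfl⟩ <;> nlinarith

lemma edgeSqLinN_le_of_edge {βm βp h : ℝ} (hh : 0 ≤ h) (d e c2m c3m c2p c3p : ℝ)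
    {P Q nB : ℝ × ℝ}
    (hPQ : (P = ((0:ℝ), (0:ℝ)) ∧ Q = (h, 0)) ∨ (P = ((0:ℝ), (0:ℝ)) ∧ Q = (0, h)) ∨
      (P = ((h:ℝ), (0:ℝ)) ∧ Q = (0, h)))
    (hn : nB.1 ^ 2 + nB.2 ^ 2 = 1) :
    edgeSqLinN βm βp h d e c2m c3m c2p c3p P Q nB ≤
      2 * h * ((βm ^ 2 + βp ^ 2) * max (c2m ^ 2 + c3m ^ 2) (c2p ^ 2 + c3p ^ 2)) := by
  refine (edgeSqLinN_le βm βp h d e c2m c3m c2p c3p P Q hn).trans ?_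
  rw [add_mul]
  gcongr
  exacts [edge_length_le hh hPQ, le_max_left _ _, le_max_right _ _]

lemma sqrt_le_sqrt_mul_sqrt_mul_inv_sqrt_mul_sqrt {X k h E : ℝ} (hk : 0 ≤ k) (hh : 0 < h)
    (hX : X * h ≤ 2 * k * E) :
    √X ≤ √k * √h * (√(h ^ 2 / 2))⁻¹ * √E := by
  rw [← Real.sqrt_inv, ← Real.sqrt_mul hk, ← Real.sqrt_mul (by positivity),
    ← Real.sqrt_mul (by positivity)]
  refine Real.sqrt_le_sqrt ?_
  calc X = X * h / h := by field_simp
    _ ≤ 2 * k * E / h := by gcongr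
    _ = k * h * (h ^ 2 / 2)⁻¹ * E := by field_simp

/-- trace inequality `∥β ∇v·n_B∥_{L²(B)} ≤ C h^{1/2} |K|^{-1/2} ∥√β ∇v∥_{L²(K)}`
for linear IFE functions on the triangle `K`, for every edge `B` of `K` with unit normal
`n_B`, with `C` depending only on `β⁻, β⁺`. -/
theorem stmt4 (βm βp : ℝ) (hβm : 0 < βm) (hβp : 0 < βp) :
    ∃ C : ℝ, 0 < C ∧
      ∀ h d e c1m c2m c3m c1p c2p c3p : ℝ,
        0 < h → h < 1 →
        d ∈ Set.Icc (0:ℝ) 1 → e ∈ Set.Icc (0:ℝ) 1 → (d, e) ≠ (0, 0) →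
        (c1m + c3m * (d * h) = c1p + c3p * (d * h)) →
        (c1m + c2m * (e * h) = c1p + c2p * (e * h)) →
        (βm * (d * c2m + e * c3m) = βp * (d * c2p + e * c3p)) →
        ∀ P Q nB : ℝ × ℝ,
          ((P = ((0:ℝ), (0:ℝ)) ∧ Q = (h, 0)) ∨
           (P = ((0:ℝ), (0:ℝ)) ∧ Q = (0, h)) ∨
           (P = ((h:ℝ), (0:ℝ)) ∧ Q = (0, h))) →
          nB.1 ^ 2 + nB.2 ^ 2 = 1 →
          nB.1 * (Q.1 - P.1) + nB.2 * (Q.2 - P.2) = 0 →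
          Real.sqrt (edgeSqLinN βm βp h d e c2m c3m c2p c3p P Q nB)
              ≤ C * Real.sqrt h * (Real.sqrt (h ^ 2 / 2))⁻¹ *
                Real.sqrt (energySqLin βm βp h d e c2m c3m c2p c3p) := by
  set m := min βm βp
  set M := max βm βp
  have hm : 0 < m := lt_min hβm hβp
  refine ⟨√(4 * (βm ^ 2 + βp ^ 2) * M ^ 2 / m ^ 3), by positivity, ?_⟩
  intro h d e c1m c2m c3m c1p c2p c3p hh _ _ _ hde hJ1 hJ2 hflux P Q nB hPQ hn _
  set G := max (c2m ^ 2 + c3m ^ 2) (c2p ^ 2 + c3p ^ 2)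
  set g := min (c2m ^ 2 + c3m ^ 2) (c2p ^ 2 + c3p ^ 2)
  have hcomp : m ^ 2 * G ≤ M ^ 2 * g :=
    min_sq_mul_max_le_max_sq_mul_min hβm hβp hh hde hJ1 hJ2 hflux
  have henergy := min_mul_sq_div_four_mul_min_le_energySqLin hβm hβp hh.le d e c2m c3m c2p c3p
  have hedge := edgeSqLinN_le_of_edge (βm := βm) (βp := βp) hh.le d e c2m c3m c2p c3p hPQ hn
  refine sqrt_le_sqrt_mul_sqrt_mul_inv_sqrt_mul_sqrt (by positivity) hh ?_
  calc _ ≤ 2 * h * ((βm ^ 2 + βp ^ 2) * G) * h := by gcongr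
    _ = 2 * h ^ 2 * (βm ^ 2 + βp ^ 2) / m ^ 2 * (m ^ 2 * G) := by field_simp
    _ ≤ 2 * h ^ 2 * (βm ^ 2 + βp ^ 2) / m ^ 2 * (M ^ 2 * g) := by gcongr
    _ = 2 * (4 * (βm ^ 2 + βp ^ 2) * M ^ 2 / m ^ 3) * (m * (h ^ 2 / 4) * g) := by
      field_simp
    _ ≤ _ := by gcongr
end

section
/- There exists a constant C depending only on β⁻ and β⁺ (independent of d, e and h) such that for all 0 < h < 1, every interface configuration on K = [0,h]² of Type I (d, e ∈ [0,1], (d,e) ≠ (0,0)) or Type II (d, e ∈ [0,1]), every bilinear IFE function v on K, every edge B of K, and each p ∈ {x, y}: ∥β v_p∥_{L²(B)} ≤ C h^{1/2} |K|^{-1/2} ∥√β ∇v∥_{L²(K)}. -/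
/-!
On `K = [0,h]²` the quantity `N = c₂² + c₃² + g²h²` of a bilinear piece `c₁ + c₂x + c₃y + gxy`
bounds its gradient everywhere on `K`, so every edge term is at most a constant times
`h (N⁻ + N⁺)`. Conversely, in both interface types one of `K⁻`, `K⁺` contains an axis-parallel
square of side `h/4`, on which the energy of that piece is at least a constant times `h² N`.
The jump conditions transfer this to the other piece: continuity at `D` and `E` makes
`∇v⁺ - ∇v⁻ = S n̄` constant and orthogonal to `DE`, and since the flux integrand is affine along
`DE` the flux condition says `β⁻ ∂ₙv⁻ = β⁺ ∂ₙv⁺` at the midpoint of `DE`, i.e.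
`β⁺ S = (β⁻ - β⁺) ∂ₙv⁻`. Hence `N⁺ ≲ N⁻` and `N⁻ ≲ N⁺`, so the energy controls
`h² (N⁻ + N⁺)`.
-/

open MeasureTheory

/-- The closed square `K = [0,h] × [0,h]`. -/
def sqK (h : ℝ) : Set (ℝ × ℝ) := Set.Icc (0:ℝ) h ×ˢ Set.Icc (0:ℝ) h

/-- `n` is a unit normal to the segment from `D` to `E`. -/
def unitNormalTo (n D E : ℝ × ℝ) : Prop :=
  n.1 ^ 2 + n.2 ^ 2 = 1 ∧ n.1 * (E.1 - D.1) + n.2 * (E.2 - D.2) = 0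

/-- Jump conditions for bilinear IFE functions with pieces
`v⁻ = c₁⁻ + c₂⁻x + c₃⁻y + c₄xy`, `v⁺ = c₁⁺ + c₂⁺x + c₃⁺y + c₄xy`:
`v⁻(D) = v⁺(D)`, `v⁻(E) = v⁺(E)`, and `∫_{DE} β⁻∇v⁻·n̄ ds = ∫_{DE} β⁺∇v⁺·n̄ ds`,
the segment `DE` being parametrized by `t ↦ D + t(E-D)`, `t ∈ [0,1]`, with arclength
element `ds = ‖E-D‖ dt`. -/
noncomputable def bilJump (βm βp c1m c2m c3m c1p c2p c3p c4 : ℝ) (D E n : ℝ × ℝ) : Prop :=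
  c1m + c2m * D.1 + c3m * D.2 + c4 * D.1 * D.2
      = c1p + c2p * D.1 + c3p * D.2 + c4 * D.1 * D.2 ∧
  c1m + c2m * E.1 + c3m * E.2 + c4 * E.1 * E.2
      = c1p + c2p * E.1 + c3p * E.2 + c4 * E.1 * E.2 ∧
  Real.sqrt ((E.1 - D.1) ^ 2 + (E.2 - D.2) ^ 2) *
      (∫ t in (0:ℝ)..1, βm * ((c2m + c4 * (D.2 + t * (E.2 - D.2))) * n.1 +
        (c3m + c4 * (D.1 + t * (E.1 - D.1))) * n.2))
    = Real.sqrt ((E.1 - D.1) ^ 2 + (E.2 - D.2) ^ 2) *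
      (∫ t in (0:ℝ)..1, βp * ((c2p + c4 * (D.2 + t * (E.2 - D.2))) * n.1 +
        (c3p + c4 * (D.1 + t * (E.1 - D.1))) * n.2))

/-- `∥√β ∇v∥²_{L²(K)} = β⁻∫_{K⁻}|∇v⁻|² + β⁺∫_{K⁺}|∇v⁺|²` for the piecewise bilinear
function with pieces `vˢ = c₁ˢ + c₂ˢx + c₃ˢy + c₄xy`, `∇vˢ = (c₂ˢ + c₄y, c₃ˢ + c₄x)`. -/
noncomputable def energySqBil (βm βp c2m c3m c2p c3p c4 : ℝ) (Km Kp : Set (ℝ × ℝ)) : ℝ :=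
  βm * (∫ X in Km, ((c2m + c4 * X.2) ^ 2 + (c3m + c4 * X.1) ^ 2)) +
    βp * (∫ X in Kp, ((c2p + c4 * X.2) ^ 2 + (c3p + c4 * X.1) ^ 2))

/-- `∥β v_x∥²_{L²(B)} = ∫_{B∩K⁻}(β⁻ ∂ₓv⁻)² ds + ∫_{B∩K⁺}(β⁺ ∂ₓv⁺)² ds`, where the segment
`B` from `P` to `Q` is parametrized by `t ↦ P + t(Q-P)`, `t ∈ [0,1]`, `ds` arclength,
and `∂ₓ vˢ(x,y) = c₂ˢ + c₄ y`. -/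
noncomputable def edgeSqBilX (βm βp c2m c2p c4 : ℝ) (Km Kp : Set (ℝ × ℝ)) (P Q : ℝ × ℝ) : ℝ :=
  Real.sqrt ((Q.1 - P.1) ^ 2 + (Q.2 - P.2) ^ 2) *
    ((∫ t in {t : ℝ | t ∈ Set.Icc (0:ℝ) 1 ∧ P + t • (Q - P) ∈ Km},
        (βm * (c2m + c4 * (P + t • (Q - P)).2)) ^ 2) +
     (∫ t in {t : ℝ | t ∈ Set.Icc (0:ℝ) 1 ∧ P + t • (Q - P) ∈ Kp},
        (βp * (c2p + c4 * (P + t • (Q - P)).2)) ^ 2))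

/-- `∥β v_y∥²_{L²(B)}`, with `∂_y vˢ(x,y) = c₃ˢ + c₄ x`. -/
noncomputable def edgeSqBilY (βm βp c3m c3p c4 : ℝ) (Km Kp : Set (ℝ × ℝ)) (P Q : ℝ × ℝ) : ℝ :=
  Real.sqrt ((Q.1 - P.1) ^ 2 + (Q.2 - P.2) ^ 2) *
    ((∫ t in {t : ℝ | t ∈ Set.Icc (0:ℝ) 1 ∧ P + t • (Q - P) ∈ Km},
        (βm * (c3m + c4 * (P + t • (Q - P)).1)) ^ 2) +
     (∫ t in {t : ℝ | t ∈ Set.Icc (0:ℝ) 1 ∧ P + t • (Q - P) ∈ Kp},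
        (βp * (c3p + c4 * (P + t • (Q - P)).1)) ^ 2))

open Set

def quarterSq (h x₀ y₀ : ℝ) : Set (ℝ × ℝ) := Icc x₀ (x₀ + h / 4) ×ˢ Icc y₀ (y₀ + h / 4)

/-- For `v = c₁ + c₂ x + c₃ y + g x y` on `[0,h]²`, this is comparable to `sup |∇v|²`. -/
def gradCoeffSq (c₂ c₃ g h : ℝ) : ℝ := c₂ ^ 2 + c₃ ^ 2 + g ^ 2 * h ^ 2

def normalDerivAt (c₂ c₃ g : ℝ) (X n : ℝ × ℝ) : ℝ := (c₂ + g * X.2) * n.1 + (c₃ + g * X.1) * n.2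

structure InterfaceGeometry (h : ℝ) (D E : ℝ × ℝ) (Km Kp : Set (ℝ × ℝ)) : Prop where
  D_mem : D ∈ sqK h
  E_mem : E ∈ sqK h
  ne : D ≠ E
  minus_subset : Km ⊆ sqK h
  plus_subset : Kp ⊆ sqK h
  quarterSq_subset : (∃ x₀ y₀, quarterSq h x₀ y₀ ⊆ Km) ∨ ∃ x₀ y₀, quarterSq h x₀ y₀ ⊆ Kp

lemma sq_add_mul_le {c g y h : ℝ} (hy : y ∈ Icc 0 h) :
    (c + g * y) ^ 2 ≤ 2 * (c ^ 2 + g ^ 2 * h ^ 2) := by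
  have hy2 : g ^ 2 * y ^ 2 ≤ g ^ 2 * h ^ 2 :=
    mul_le_mul_of_nonneg_left (pow_le_pow_left₀ hy.1 hy.2 2) (sq_nonneg g)
  nlinarith [sq_nonneg (c - g * y)]

lemma intervalIntegral_sq_affine (c g a L : ℝ) :
    ∫ y in a..a + L, (c + g * y) ^ 2 = L * (c + g * (a + L / 2)) ^ 2 + g ^ 2 * L ^ 3 / 12 := by
  have hF : ∀ y, HasDerivAt (fun y => c ^ 2 * y + c * g * y ^ 2 + g ^ 2 * y ^ 3 / 3)
      ((c + g * y) ^ 2) y := fun y =>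
    ((((hasDerivAt_id' y).const_mul (c ^ 2)).add ((hasDerivAt_pow 2 y).const_mul (c * g))).add
      (((hasDerivAt_pow 3 y).const_mul (g ^ 2)).div_const 3)).congr_deriv (by push_cast; ring)
  rw [intervalIntegral.integral_eq_sub_of_hasDerivAt (fun y _ => hF y)
    (Continuous.intervalIntegrable (by fun_prop) _ _)]
  ring

lemma le_intervalIntegral_sq_affine {c g h y₀ : ℝ} (h0 : 0 < h) (hy₀ : 0 ≤ y₀)
    (hy₁ : y₀ + h / 4 ≤ h) :
    h / 2304 * (c ^ 2 + g ^ 2 * h ^ 2) ≤ ∫ y in y₀..y₀ + h / 4, (c + g * y) ^ 2 := by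
  rw [intervalIntegral_sq_affine]
  have hm : y₀ + h / 4 / 2 ∈ Icc 0 h := ⟨by positivity, by linarith⟩
  set m := y₀ + h / 4 / 2
  have hc : c ^ 2 ≤ 2 * (c + g * m) ^ 2 + 2 * (g ^ 2 * h ^ 2) := by
    nlinarith [sq_nonneg (c + 2 * g * m),
      mul_le_mul_of_nonneg_left (pow_le_pow_left₀ hm.1 hm.2 2) (sq_nonneg g)]
  nlinarith [mul_le_mul_of_nonneg_left hc h0.le, mul_nonneg h0.le (sq_nonneg (c + g * m)),
    mul_nonneg (sq_nonneg g) (pow_nonneg h0.le 3)]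

lemma setIntegral_quarterSq (c₂ c₃ g : ℝ) {h : ℝ} (hh : 0 ≤ h) (x₀ y₀ : ℝ) :
    ∫ X in quarterSq h x₀ y₀, ((c₂ + g * X.2) ^ 2 + (c₃ + g * X.1) ^ 2)
      = h / 4 * ((∫ y in y₀..y₀ + h / 4, (c₂ + g * y) ^ 2)
          + ∫ x in x₀..x₀ + h / 4, (c₃ + g * x) ^ 2) := by
  have hIcc : ∀ (f : ℝ → ℝ) (a : ℝ), ∫ x in Icc a (a + h / 4), f x = ∫ x in a..a + h / 4, f x :=
    fun f a => by rw [integral_Icc_eq_integral_Ioc, intervalIntegral.integral_of_le (by linarith)]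
  have hlen : ∀ a : ℝ, ∫ _ in Icc a (a + h / 4), (1 : ℝ) = h / 4 := fun a => by
    simp [Real.volume_Icc, measureReal_def, div_nonneg hh zero_le_four]
  have hint : ∀ f : ℝ × ℝ → ℝ, Continuous f → IntegrableOn f (quarterSq h x₀ y₀) := fun f hf =>
    hf.continuousOn.integrableOn_compact (isCompact_Icc.prod isCompact_Icc)
  rw [integral_add (hint _ (by fun_prop)) (hint _ (by fun_prop)), quarterSq,
    Measure.volume_eq_prod, mul_add]
  congr 1
  · simpa [hlen, hIcc] using setIntegral_prod_mul (μ := volume) (ν := volume)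
      (fun _ => (1 : ℝ)) (fun y => (c₂ + g * y) ^ 2) (Icc x₀ (x₀ + h / 4)) (Icc y₀ (y₀ + h / 4))
  · simpa [hlen, hIcc, mul_comm] using setIntegral_prod_mul (μ := volume) (ν := volume)
      (fun x => (c₃ + g * x) ^ 2) (fun _ => (1 : ℝ)) (Icc x₀ (x₀ + h / 4)) (Icc y₀ (y₀ + h / 4))

lemma le_setIntegral_of_quarterSq_subset (c₂ c₃ g : ℝ) {h x₀ y₀ : ℝ} {K : Set (ℝ × ℝ)}
    (h0 : 0 < h) (hK : K ⊆ sqK h) (hQ : quarterSq h x₀ y₀ ⊆ K) :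
    h ^ 2 / 9216 * gradCoeffSq c₂ c₃ g h
      ≤ ∫ X in K, ((c₂ + g * X.2) ^ 2 + (c₃ + g * X.1) ^ 2) := by
  have hlo : (x₀, y₀) ∈ sqK h := hK (hQ ⟨⟨le_rfl, by linarith⟩, le_rfl, by linarith⟩)
  have hhi : (x₀ + h / 4, y₀ + h / 4) ∈ sqK h :=
    hK (hQ ⟨⟨by linarith, le_rfl⟩, by linarith, le_rfl⟩)
  have hy := le_intervalIntegral_sq_affine (c := c₂) (g := g) h0 hlo.2.1 hhi.2.2
  have hx := le_intervalIntegral_sq_affine (c := c₃) (g := g) h0 hlo.1.1 hhi.1.2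
  have hint : IntegrableOn (fun X : ℝ × ℝ => (c₂ + g * X.2) ^ 2 + (c₃ + g * X.1) ^ 2) K :=
    ((by fun_prop : Continuous _).continuousOn.integrableOn_compact
      (isCompact_Icc.prod isCompact_Icc)).mono_set hK
  calc h ^ 2 / 9216 * gradCoeffSq c₂ c₃ g h
      ≤ h / 4 * ((∫ y in y₀..y₀ + h / 4, (c₂ + g * y) ^ 2)
          + ∫ x in x₀..x₀ + h / 4, (c₃ + g * x) ^ 2) := by
        unfold gradCoeffSq
        nlinarith [mul_le_mul_of_nonneg_left (add_le_add hy hx) h0.le,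
          mul_nonneg (pow_nonneg h0.le 3) (mul_nonneg (sq_nonneg g) (sq_nonneg h))]
    _ = ∫ X in quarterSq h x₀ y₀, ((c₂ + g * X.2) ^ 2 + (c₃ + g * X.1) ^ 2) :=
        (setIntegral_quarterSq c₂ c₃ g h0.le x₀ y₀).symm
    _ ≤ ∫ X in K, ((c₂ + g * X.2) ^ 2 + (c₃ + g * X.1) ^ 2) :=
        setIntegral_mono_set hint (.of_forall fun _ => by positivity) hQ.eventuallyLE

lemma InterfaceGeometry.le_energySqBil {h : ℝ} {D E : ℝ × ℝ} {Km Kp : Set (ℝ × ℝ)}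
    (hg : InterfaceGeometry h D E Km Kp) (h0 : 0 < h) {βm βp : ℝ} (hβm : 0 < βm) (hβp : 0 < βp)
    (c2m c3m c2p c3p c4 : ℝ) :
    min βm βp * (h ^ 2 / 9216) * gradCoeffSq c2m c3m c4 h
        ≤ energySqBil βm βp c2m c3m c2p c3p c4 Km Kp ∨
      min βm βp * (h ^ 2 / 9216) * gradCoeffSq c2p c3p c4 h
        ≤ energySqBil βm βp c2m c3m c2p c3p c4 Km Kp := by
  have hm : 0 ≤ βm * ∫ X in Km, ((c2m + c4 * X.2) ^ 2 + (c3m + c4 * X.1) ^ 2) :=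
    mul_nonneg hβm.le (integral_nonneg fun _ => by positivity)
  have hp : 0 ≤ βp * ∫ X in Kp, ((c2p + c4 * X.2) ^ 2 + (c3p + c4 * X.1) ^ 2) :=
    mul_nonneg hβp.le (integral_nonneg fun _ => by positivity)
  have hN : ∀ c₂ c₃, 0 ≤ h ^ 2 / 9216 * gradCoeffSq c₂ c₃ c4 h := fun _ _ => by
    unfold gradCoeffSq; positivity
  rcases hg.quarterSq_subset with ⟨x₀, y₀, hQ⟩ | ⟨x₀, y₀, hQ⟩
  · left
    have := le_setIntegral_of_quarterSq_subset c2m c3m c4 h0 hg.minus_subset hQ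
    unfold energySqBil
    nlinarith [mul_le_mul_of_nonneg_right (min_le_left βm βp) (hN c2m c3m)]
  · right
    have := le_setIntegral_of_quarterSq_subset c2p c3p c4 h0 hg.plus_subset hQ
    unfold energySqBil
    nlinarith [mul_le_mul_of_nonneg_right (min_le_right βm βp) (hN c2p c3p)]

lemma intervalIntegral_flux (β c₂ c₃ g : ℝ) (D E n : ℝ × ℝ) :
    ∫ t in (0 : ℝ)..1, β * ((c₂ + g * (D.2 + t * (E.2 - D.2))) * n.1 +
        (c₃ + g * (D.1 + t * (E.1 - D.1))) * n.2)
      = β * normalDerivAt c₂ c₃ g ((D.1 + E.1) / 2, (D.2 + E.2) / 2) n := by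
  have hlin : ∀ t : ℝ, β * ((c₂ + g * (D.2 + t * (E.2 - D.2))) * n.1 +
        (c₃ + g * (D.1 + t * (E.1 - D.1))) * n.2)
      = β * normalDerivAt c₂ c₃ g D n + t * (β * g * ((E.2 - D.2) * n.1 + (E.1 - D.1) * n.2)) :=
    fun t => by unfold normalDerivAt; ring
  simp only [hlin]
  simp [intervalIntegral.integral_add, intervalIntegral.integral_mul_const, normalDerivAt]
  ring

lemma bilJump_flux_balance {βm βp c1m c2m c3m c1p c2p c3p g : ℝ} {D E n : ℝ × ℝ}
    (hDE : D ≠ E) (hn : unitNormalTo n D E)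
    (hj : bilJump βm βp c1m c2m c3m c1p c2p c3p g D E n) :
    ∃ S : ℝ, c2p - c2m = S * n.1 ∧ c3p - c3m = S * n.2 ∧
      βm * normalDerivAt c2m c3m g ((D.1 + E.1) / 2, (D.2 + E.2) / 2) n
        = βp * normalDerivAt c2p c3p g ((D.1 + E.1) / 2, (D.2 + E.2) / 2) n := by
  obtain ⟨hn1, hn2⟩ := hn
  obtain ⟨hjD, hjE, hjF⟩ := hj
  have hlen : 0 < (E.1 - D.1) ^ 2 + (E.2 - D.2) ^ 2 := by
    by_contra! hle
    exact hDE (Prod.ext (by nlinarith [sq_nonneg (E.1 - D.1), sq_nonneg (E.2 - D.2)])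
      (by nlinarith [sq_nonneg (E.1 - D.1), sq_nonneg (E.2 - D.2)]))
  have horth : (c2p - c2m) * (E.1 - D.1) + (c3p - c3m) * (E.2 - D.2) = 0 := by
    linear_combination hjD - hjE
  have hcross : (c2p - c2m) * n.2 - (c3p - c3m) * n.1 = 0 := by
    refine (mul_eq_zero.1 (?_ : _ * ((E.1 - D.1) ^ 2 + (E.2 - D.2) ^ 2) = 0)).resolve_right
      hlen.ne'
    linear_combination (n.2 * (E.1 - D.1) - n.1 * (E.2 - D.2)) * horth
      + ((c2p - c2m) * (E.2 - D.2) - (c3p - c3m) * (E.1 - D.1)) * hn2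
  refine ⟨(c2p - c2m) * n.1 + (c3p - c3m) * n.2, ?_, ?_, ?_⟩
  · linear_combination (-(c2p - c2m)) * hn1 + n.2 * hcross
  · linear_combination (-(c3p - c3m)) * hn1 - n.1 * hcross
  · rw [intervalIntegral_flux, intervalIntegral_flux] at hjF
    exact mul_left_cancel₀ (Real.sqrt_pos.2 hlen).ne' hjF

lemma normalDerivAt_sq_le {c₂ c₃ g h : ℝ} {X n : ℝ × ℝ} (hX : X ∈ sqK h)
    (hn : n.1 ^ 2 + n.2 ^ 2 = 1) :
    normalDerivAt c₂ c₃ g X n ^ 2 ≤ 4 * gradCoeffSq c₂ c₃ g h := by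
  have h₂ := sq_add_mul_le (c := c₂) (g := g) hX.2
  have h₃ := sq_add_mul_le (c := c₃) (g := g) hX.1
  have hCS : normalDerivAt c₂ c₃ g X n ^ 2 ≤ (c₂ + g * X.2) ^ 2 + (c₃ + g * X.1) ^ 2 := by
    unfold normalDerivAt
    nlinarith [sq_nonneg ((c₂ + g * X.2) * n.2 - (c₃ + g * X.1) * n.1)]
  unfold gradCoeffSq
  nlinarith [mul_nonneg (sq_nonneg g) (sq_nonneg h)]

lemma gradCoeffSq_le_of_flux_balance {β β' b c₂ c₃ c₂' c₃' g h S : ℝ} {X n : ℝ × ℝ}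
    (hb : 0 < b) (hbβ' : b ≤ β') (hX : X ∈ sqK h) (hn : n.1 ^ 2 + n.2 ^ 2 = 1)
    (h₂ : c₂' - c₂ = S * n.1) (h₃ : c₃' - c₃ = S * n.2)
    (hflux : β * normalDerivAt c₂ c₃ g X n = β' * normalDerivAt c₂' c₃' g X n) :
    gradCoeffSq c₂' c₃' g h ≤ (2 + 8 * (β - β') ^ 2 / b ^ 2) * gradCoeffSq c₂ c₃ g h := by
  have hjump : normalDerivAt c₂' c₃' g X n = normalDerivAt c₂ c₃ g X n + S := by
    unfold normalDerivAt; linear_combination n.1 * h₂ + n.2 * h₃ + S * hn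
  have hS : β' * S = (β - β') * normalDerivAt c₂ c₃ g X n := by
    linear_combination -hflux - β' * hjump
  have hS2 : b ^ 2 * S ^ 2 ≤ 4 * (β - β') ^ 2 * gradCoeffSq c₂ c₃ g h := by
    calc b ^ 2 * S ^ 2 ≤ (β' * S) ^ 2 := by
          rw [mul_pow]; gcongr
      _ = (β - β') ^ 2 * normalDerivAt c₂ c₃ g X n ^ 2 := by rw [hS, mul_pow]
      _ ≤ (β - β') ^ 2 * (4 * gradCoeffSq c₂ c₃ g h) := by
          gcongr; exact normalDerivAt_sq_le hX hn
      _ = 4 * (β - β') ^ 2 * gradCoeffSq c₂ c₃ g h := by ring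
  have hN' : gradCoeffSq c₂' c₃' g h ≤ 2 * gradCoeffSq c₂ c₃ g h + 2 * S ^ 2 := by
    unfold gradCoeffSq
    rw [show c₂' = c₂ + S * n.1 by linarith, show c₃' = c₃ + S * n.2 by linarith]
    nlinarith [sq_nonneg (c₂ - S * n.1), sq_nonneg (c₃ - S * n.2),
      mul_nonneg (sq_nonneg g) (sq_nonneg h)]
  have hS2' : S ^ 2 ≤ 4 * (β - β') ^ 2 / b ^ 2 * gradCoeffSq c₂ c₃ g h := by
    rw [div_mul_eq_mul_div, le_div_iff₀ (by positivity)]; linarith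
  linarith [show (2 + 8 * (β - β') ^ 2 / b ^ 2) * gradCoeffSq c₂ c₃ g h
    = 2 * gradCoeffSq c₂ c₃ g h + 2 * (4 * (β - β') ^ 2 / b ^ 2 * gradCoeffSq c₂ c₃ g h) by ring]

lemma midpoint_mem_sqK {h : ℝ} {D E : ℝ × ℝ} (hD : D ∈ sqK h) (hE : E ∈ sqK h) :
    ((D.1 + E.1) / 2, (D.2 + E.2) / 2) ∈ sqK h := by
  obtain ⟨⟨hD1, hD1'⟩, hD2, hD2'⟩ := hD
  obtain ⟨⟨hE1, hE1'⟩, hE2, hE2'⟩ := hE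
  exact ⟨⟨by linarith, by linarith⟩, by linarith, by linarith⟩

noncomputable def coeffRatio (βm βp : ℝ) : ℝ := 2 + 8 * (βm - βp) ^ 2 / min βm βp ^ 2

lemma gradCoeffSq_le_coeffRatio_mul {h βm βp c1m c2m c3m c1p c2p c3p c4 : ℝ}
    {D E n : ℝ × ℝ} {Km Kp : Set (ℝ × ℝ)} (hβm : 0 < βm) (hβp : 0 < βp)
    (hg : InterfaceGeometry h D E Km Kp) (hn : unitNormalTo n D E)
    (hj : bilJump βm βp c1m c2m c3m c1p c2p c3p c4 D E n) :
    gradCoeffSq c2p c3p c4 h ≤ coeffRatio βm βp * gradCoeffSq c2m c3m c4 h ∧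
      gradCoeffSq c2m c3m c4 h ≤ coeffRatio βm βp * gradCoeffSq c2p c3p c4 h := by
  obtain ⟨S, h₂, h₃, hflux⟩ := bilJump_flux_balance hg.ne hn hj
  have hM := midpoint_mem_sqK hg.D_mem hg.E_mem
  have hb : 0 < min βm βp := lt_min hβm hβp
  refine ⟨gradCoeffSq_le_of_flux_balance hb (min_le_right _ _) hM hn.1 h₂ h₃ hflux, ?_⟩
  have := gradCoeffSq_le_of_flux_balance (S := -S) hb (min_le_left _ _) hM hn.1
    (by linarith) (by linarith) hflux.symm
  rwa [show (βp - βm) ^ 2 = (βm - βp) ^ 2 by ring] at this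

lemma InterfaceGeometry.add_gradCoeffSq_le_energySqBil {h βm βp c1m c2m c3m c1p c2p c3p c4 : ℝ}
    {D E n : ℝ × ℝ} {Km Kp : Set (ℝ × ℝ)} (hg : InterfaceGeometry h D E Km Kp) (h0 : 0 < h)
    (hβm : 0 < βm) (hβp : 0 < βp) (hn : unitNormalTo n D E)
    (hj : bilJump βm βp c1m c2m c3m c1p c2p c3p c4 D E n) :
    min βm βp * (h ^ 2 / 9216) * (gradCoeffSq c2m c3m c4 h + gradCoeffSq c2p c3p c4 h)
      ≤ (1 + coeffRatio βm βp) * energySqBil βm βp c2m c3m c2p c3p c4 Km Kp := by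
  obtain ⟨hpm, hmp⟩ := gradCoeffSq_le_coeffRatio_mul hβm hβp hg hn hj
  set w := min βm βp * (h ^ 2 / 9216)
  set En := energySqBil βm βp c2m c3m c2p c3p c4 Km Kp
  have hw : 0 ≤ w := by have := lt_min hβm hβp; positivity
  have hκ : 0 ≤ 1 + coeffRatio βm βp := by unfold coeffRatio; positivity
  have key : ∀ N₁ N₂ : ℝ, N₂ ≤ coeffRatio βm βp * N₁ → w * N₁ ≤ En →
      w * (N₁ + N₂) ≤ (1 + coeffRatio βm βp) * En := fun N₁ N₂ h₂₁ hE =>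
    calc w * (N₁ + N₂) ≤ w * ((1 + coeffRatio βm βp) * N₁) := by gcongr; linarith
      _ = (1 + coeffRatio βm βp) * (w * N₁) := by ring
      _ ≤ (1 + coeffRatio βm βp) * En := mul_le_mul_of_nonneg_left hE hκ
  rcases hg.le_energySqBil h0 hβm hβp c2m c3m c2p c3p c4 with hE | hE
  · exact key _ _ hpm hE
  · exact add_comm (gradCoeffSq c2p c3p c4 h) _ ▸ key _ _ hmp hE

lemma setIntegral_le_of_subset_unitInterval {f : ℝ → ℝ} {S : Set ℝ} {M : ℝ}
    (hS : S ⊆ Icc 0 1) (hM : 0 ≤ M) (hf : ∀ t ∈ S, |f t| ≤ M) : ∫ t in S, f t ≤ M := by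
  have hvol : volume.real S ≤ 1 := by
    simpa using measureReal_mono (μ := volume) hS (by simp)
  calc ∫ t in S, f t ≤ ‖∫ t in S, f t‖ := le_abs_self _
    _ ≤ M * volume.real S :=
        norm_setIntegral_le_of_norm_le_const ((measure_mono hS).trans_lt (by simp)) hf
    _ ≤ M := mul_le_of_le_one_right hM hvol

lemma mul_add_setIntegral_sq_le {βm βp cm cp g h N : ℝ} {Sm Sp : Set ℝ} {y : ℝ → ℝ}
    (hh : 0 ≤ h) (hSm : Sm ⊆ Icc 0 1) (hSp : Sp ⊆ Icc 0 1) (hy : ∀ t ∈ Icc (0:ℝ) 1, y t ∈ Icc 0 h)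
    (hNm : cm ^ 2 + g ^ 2 * h ^ 2 ≤ N) (hNp : cp ^ 2 + g ^ 2 * h ^ 2 ≤ N) :
    h * ((∫ t in Sm, (βm * (cm + g * y t)) ^ 2) + ∫ t in Sp, (βp * (cp + g * y t)) ^ 2)
      ≤ 2 * (βm ^ 2 + βp ^ 2) * h * N := by
  have key : ∀ {β c : ℝ} {S : Set ℝ}, S ⊆ Icc 0 1 → c ^ 2 + g ^ 2 * h ^ 2 ≤ N →
      ∫ t in S, (β * (c + g * y t)) ^ 2 ≤ β ^ 2 * (2 * N) := fun {β c S} hS hN =>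
    setIntegral_le_of_subset_unitInterval hS
      (mul_nonneg (sq_nonneg β) (by nlinarith [sq_nonneg c, sq_nonneg (g * h)])) fun t ht => by
      rw [abs_of_nonneg (sq_nonneg _), mul_pow]
      exact mul_le_mul_of_nonneg_left ((sq_add_mul_le (hy t (hS ht))).trans (by linarith))
        (sq_nonneg β)
  calc _ ≤ h * (βm ^ 2 * (2 * N) + βp ^ 2 * (2 * N)) := by
        gcongr
        exacts [key hSm hNm, key hSp hNp]
    _ = 2 * (βm ^ 2 + βp ^ 2) * h * N := by ring

lemma edge_length_eq_and_segment_mem {h : ℝ} (hh : 0 ≤ h) {P Q : ℝ × ℝ}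
    (hPQ : (P = ((0:ℝ), (0:ℝ)) ∧ Q = ((0:ℝ), h)) ∨ (P = ((h:ℝ), (0:ℝ)) ∧ Q = (h, h)) ∨
      (P = ((0:ℝ), (0:ℝ)) ∧ Q = (h, (0:ℝ))) ∨ (P = ((0:ℝ), h) ∧ Q = (h, h))) :
    Real.sqrt ((Q.1 - P.1) ^ 2 + (Q.2 - P.2) ^ 2) = h ∧
      ∀ t ∈ Icc (0:ℝ) 1, P + t • (Q - P) ∈ sqK h := by
  rcases hPQ with ⟨rfl, rfl⟩ | ⟨rfl, rfl⟩ | ⟨rfl, rfl⟩ | ⟨rfl, rfl⟩ <;>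
  refine ⟨by simp [Real.sqrt_sq hh], fun t ⟨ht0, ht1⟩ => ?_⟩ <;>
  simp only [sqK, Prod.mk_sub_mk, Prod.smul_mk, Prod.mk_add_mk, smul_eq_mul, mem_prod, mem_Icc] <;>
  refine ⟨⟨?_, ?_⟩, ?_, ?_⟩ <;> nlinarith

lemma edgeSqBilX_le {βm βp c2m c3m c2p c3p g h : ℝ} {Km Kp : Set (ℝ × ℝ)} {P Q : ℝ × ℝ}
    (hh : 0 ≤ h) (hlen : Real.sqrt ((Q.1 - P.1) ^ 2 + (Q.2 - P.2) ^ 2) = h)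
    (hseg : ∀ t ∈ Icc (0:ℝ) 1, P + t • (Q - P) ∈ sqK h) :
    edgeSqBilX βm βp c2m c2p g Km Kp P Q
      ≤ 2 * (βm ^ 2 + βp ^ 2) * h * (gradCoeffSq c2m c3m g h + gradCoeffSq c2p c3p g h) := by
  unfold edgeSqBilX
  rw [hlen]
  exact mul_add_setIntegral_sq_le (y := fun t => (P + t • (Q - P)).2) hh (fun _ ht => ht.1)
    (fun _ ht => ht.1) (fun t ht => (hseg t ht).2) (by unfold gradCoeffSq; nlinarith)
    (by unfold gradCoeffSq; nlinarith)

lemma edgeSqBilY_le {βm βp c2m c3m c2p c3p g h : ℝ} {Km Kp : Set (ℝ × ℝ)} {P Q : ℝ × ℝ}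
    (hh : 0 ≤ h) (hlen : Real.sqrt ((Q.1 - P.1) ^ 2 + (Q.2 - P.2) ^ 2) = h)
    (hseg : ∀ t ∈ Icc (0:ℝ) 1, P + t • (Q - P) ∈ sqK h) :
    edgeSqBilY βm βp c3m c3p g Km Kp P Q
      ≤ 2 * (βm ^ 2 + βp ^ 2) * h * (gradCoeffSq c2m c3m g h + gradCoeffSq c2p c3p g h) := by
  unfold edgeSqBilY
  rw [hlen]
  exact mul_add_setIntegral_sq_le (y := fun t => (P + t • (Q - P)).1) hh (fun _ ht => ht.1)
    (fun _ ht => ht.1) (fun t ht => (hseg t ht).1) (by unfold gradCoeffSq; nlinarith)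
    (by unfold gradCoeffSq; nlinarith)

lemma quarterSq_subset_sep {h x₀ y₀ : ℝ} {p : ℝ × ℝ → Prop} (hx₀ : 0 ≤ x₀) (hx₁ : x₀ + h / 4 ≤ h)
    (hy₀ : 0 ≤ y₀) (hy₁ : y₀ + h / 4 ≤ h) (hp : ∀ X ∈ quarterSq h x₀ y₀, p X) :
    quarterSq h x₀ y₀ ⊆ {X ∈ sqK h | p X} := fun X hX =>
  ⟨⟨⟨hx₀.trans hX.1.1, hX.1.2.trans hx₁⟩, hy₀.trans hX.2.1, hX.2.2.trans hy₁⟩, hp X hX⟩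

lemma mul_mem_Icc_zero {h d : ℝ} (h0 : 0 < h) (hd : d ∈ Icc (0:ℝ) 1) : d * h ∈ Icc 0 h :=
  ⟨mul_nonneg hd.1 h0.le, mul_le_of_le_one_left h0.le hd.2⟩

lemma interfaceGeometry_typeI {h d e : ℝ} (h0 : 0 < h) (hd : d ∈ Icc (0:ℝ) 1)
    (he : e ∈ Icc (0:ℝ) 1) (hde : (d, e) ≠ (0, 0)) :
    InterfaceGeometry h (0, d * h) (e * h, 0)
      {X ∈ sqK h | d * X.1 + e * X.2 ≤ d * e * h} {X ∈ sqK h | d * e * h ≤ d * X.1 + e * X.2} where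
  D_mem := ⟨⟨le_rfl, h0.le⟩, mul_mem_Icc_zero h0 hd⟩
  E_mem := ⟨mul_mem_Icc_zero h0 he, le_rfl, h0.le⟩
  ne hDE := hde <| by
    obtain ⟨he0, hd0⟩ := Prod.mk.inj hDE
    simp [(mul_eq_zero.1 hd0).resolve_right h0.ne', (mul_eq_zero.1 he0.symm).resolve_right h0.ne']
  minus_subset := sep_subset _ _
  plus_subset := sep_subset _ _
  quarterSq_subset := by
    -- the corner square at `A₄` lies in `K⁺`, since `d e ≤ (d + e) / 2`
    refine .inr ⟨3 * h / 4, 3 * h / 4, quarterSq_subset_sep (by linarith) (by linarith)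
      (by linarith) (by linarith) fun X hX => ?_⟩
    nlinarith [hX.1.1, hX.2.1, hd.1, hd.2, he.1, he.2, mul_nonneg hd.1 (sub_nonneg.2 he.2),
      mul_nonneg he.1 (sub_nonneg.2 hd.2)]

lemma interfaceGeometry_typeII {h d e : ℝ} (h0 : 0 < h) (hd : d ∈ Icc (0:ℝ) 1)
    (he : e ∈ Icc (0:ℝ) 1) :
    InterfaceGeometry h (d * h, h) (e * h, 0)
      {X ∈ sqK h | X.1 ≤ e * h + (d - e) * X.2} {X ∈ sqK h | e * h + (d - e) * X.2 ≤ X.1} where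
  D_mem := ⟨mul_mem_Icc_zero h0 hd, h0.le, le_rfl⟩
  E_mem := ⟨mul_mem_Icc_zero h0 he, le_rfl, h0.le⟩
  ne hDE := h0.ne' (Prod.mk.inj hDE).2
  minus_subset := sep_subset _ _
  plus_subset := sep_subset _ _
  quarterSq_subset := by
    rcases le_or_gt (1 / 2) d with hd2 | hd2
    · refine .inl ⟨0, 3 * h / 4, quarterSq_subset_sep le_rfl (by linarith) (by linarith)
        (by linarith) fun X hX => ?_⟩
      nlinarith [hX.1.2, hX.2.1, hX.2.2, he.1, mul_nonneg he.1 (sub_nonneg.2 hX.2.2)]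
    rcases le_or_gt (1 / 2) e with he2 | he2
    · refine .inl ⟨0, 0, quarterSq_subset_sep le_rfl (by linarith) le_rfl
        (by linarith) fun X hX => ?_⟩
      nlinarith [hX.1.2, hX.2.1, hX.2.2, hd.1, mul_nonneg hd.1 hX.2.1]
    · refine .inr ⟨3 * h / 4, 0, quarterSq_subset_sep (by linarith) (by linarith) le_rfl
        (by linarith) fun X hX => ?_⟩
      nlinarith [hX.1.1, hX.2.1, hX.2.2, mul_le_mul_of_nonneg_right hd2.le hX.2.1,
        mul_le_mul_of_nonneg_right he2.le
          (sub_nonneg.2 (hX.2.2.trans (by linarith : 0 + h / 4 ≤ h)))]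

noncomputable def traceConst (βm βp : ℝ) : ℝ :=
  18432 * (βm ^ 2 + βp ^ 2) * (1 + coeffRatio βm βp) / min βm βp

lemma traceConst_pos {βm βp : ℝ} (hβm : 0 < βm) (hβp : 0 < βp) : 0 < traceConst βm βp := by
  have := lt_min hβm hβp
  unfold traceConst coeffRatio
  positivity

lemma mul_le_traceConst_mul {βm βp h N En a : ℝ} (hβm : 0 < βm) (hβp : 0 < βp) (hh : 0 ≤ h)
    (hEn : min βm βp * (h ^ 2 / 9216) * N ≤ (1 + coeffRatio βm βp) * En)
    (ha : a ≤ 2 * (βm ^ 2 + βp ^ 2) * h * N) :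
    a * h ≤ traceConst βm βp * En := by
  have hb := lt_min hβm hβp
  calc a * h ≤ 2 * (βm ^ 2 + βp ^ 2) * h * N * h := mul_le_mul_of_nonneg_right ha hh
    _ = 18432 * (βm ^ 2 + βp ^ 2) / min βm βp * (min βm βp * (h ^ 2 / 9216) * N) := by
        field_simp; ring
    _ ≤ 18432 * (βm ^ 2 + βp ^ 2) / min βm βp * ((1 + coeffRatio βm βp) * En) := by gcongr
    _ = traceConst βm βp * En := by unfold traceConst; ring

lemma sqrt_le_of_mul_le {a b c h : ℝ} (h0 : 0 < h) (hb : 0 ≤ b)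
    (habc : a * h ≤ b * c) :
    Real.sqrt a ≤ Real.sqrt b * Real.sqrt h * (Real.sqrt (h ^ 2))⁻¹ * Real.sqrt c := by
  rw [← Real.sqrt_inv, ← Real.sqrt_mul hb, ← Real.sqrt_mul (by positivity),
    ← Real.sqrt_mul (by positivity)]
  refine Real.sqrt_le_sqrt ?_
  rw [show b * h * (h ^ 2)⁻¹ * c = b * c / h by field_simp, le_div_iff₀ h0]
  exact habc

/-- trace inequality `∥β v_p∥_{L²(B)} ≤ C h^{1/2}|K|^{-1/2}∥√β ∇v∥_{L²(K)}`
(`p = x, y`) for bilinear IFE functions on `K = [0,h]²`, for interface configurations of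
Type I or Type II and every edge `B` of `K`, with `C` depending only on `β⁻, β⁺`. -/
theorem stmt10 (βm βp : ℝ) (hβm : 0 < βm) (hβp : 0 < βp) :
    ∃ C : ℝ, 0 < C ∧
      ∀ h d e c1m c2m c3m c1p c2p c3p c4 : ℝ, ∀ D E : ℝ × ℝ, ∀ Km Kp : Set (ℝ × ℝ),
        0 < h → h < 1 →
        d ∈ Set.Icc (0:ℝ) 1 → e ∈ Set.Icc (0:ℝ) 1 →
        ((D = ((0:ℝ), d * h) ∧ E = (e * h, (0:ℝ)) ∧ (d, e) ≠ (0, 0) ∧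
            Km = {X ∈ sqK h | d * X.1 + e * X.2 ≤ d * e * h} ∧
            Kp = {X ∈ sqK h | d * e * h ≤ d * X.1 + e * X.2}) ∨
         (D = (d * h, h) ∧ E = (e * h, (0:ℝ)) ∧
            Km = {X ∈ sqK h | X.1 ≤ e * h + (d - e) * X.2} ∧
            Kp = {X ∈ sqK h | e * h + (d - e) * X.2 ≤ X.1})) →
        (∃ n : ℝ × ℝ, unitNormalTo n D E ∧
            bilJump βm βp c1m c2m c3m c1p c2p c3p c4 D E n) →
        ∀ P Q : ℝ × ℝ,
          ((P = ((0:ℝ), (0:ℝ)) ∧ Q = ((0:ℝ), h)) ∨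
           (P = ((h:ℝ), (0:ℝ)) ∧ Q = (h, h)) ∨
           (P = ((0:ℝ), (0:ℝ)) ∧ Q = (h, (0:ℝ))) ∨
           (P = ((0:ℝ), h) ∧ Q = (h, h))) →
          Real.sqrt (edgeSqBilX βm βp c2m c2p c4 Km Kp P Q)
              ≤ C * Real.sqrt h * (Real.sqrt (h ^ 2))⁻¹ *
                Real.sqrt (energySqBil βm βp c2m c3m c2p c3p c4 Km Kp) ∧
          Real.sqrt (edgeSqBilY βm βp c3m c3p c4 Km Kp P Q)
              ≤ C * Real.sqrt h * (Real.sqrt (h ^ 2))⁻¹ *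
                Real.sqrt (energySqBil βm βp c2m c3m c2p c3p c4 Km Kp) := by
  refine ⟨Real.sqrt (traceConst βm βp), Real.sqrt_pos.2 (traceConst_pos hβm hβp), ?_⟩
  intro h d e c1m c2m c3m c1p c2p c3p c4 D E Km Kp h0 _ hd he htype ⟨n, hn, hj⟩ P Q hPQ
  have hg : InterfaceGeometry h D E Km Kp := by
    rcases htype with ⟨rfl, rfl, hde, rfl, rfl⟩ | ⟨rfl, rfl, rfl, rfl⟩
    exacts [interfaceGeometry_typeI h0 hd he hde, interfaceGeometry_typeII h0 hd he]
  have hEn := hg.add_gradCoeffSq_le_energySqBil h0 hβm hβp hn hj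
  obtain ⟨hlen, hseg⟩ := edge_length_eq_and_segment_mem h0.le hPQ
  exact ⟨sqrt_le_of_mul_le h0 (traceConst_pos hβm hβp).le
      (mul_le_traceConst_mul hβm hβp h0.le hEn (edgeSqBilX_le h0.le hlen hseg)),
    sqrt_le_of_mul_le h0 (traceConst_pos hβm hβp).le
      (mul_le_traceConst_mul hβm hβp h0.le hEn (edgeSqBilY_le h0.le hlen hseg))⟩
end
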